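/- If a quadratic function f(x) = xᵀAx − 2bᵀx + c (A symmetric) attains a minimum on R^M, then its minimum value equals c − bᵀA⁺b, and the minimum is attained at every solution α of Aα = b. -/

import Mathlib

/-!
Expanding `f` around a point `z` gives
`f (z + v) = f z + 2 (A z - b) ⬝ v + vᵀ A v`.
At a minimiser `z` the linear term must vanish in every direction, so `A z = b`; the expansion
then shows `vᵀ A v ≥ 0`, so every solution of `A α = b` is a minimiser too. Finally, for such
`α`, `f α = c - b ⬝ α`, and `b ⬝ A⁺ b = (A A⁺ A α) ⬝ α = b ⬝ α` by `A A⁺ A = A`.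
-/

open Matrix

theorem eq_zero_of_forall_nonneg_quadratic {R : Type*} [Field R] [LinearOrder R]
    [IsStrictOrderedRing R] {a l : R} (h : ∀ t : R, 0 ≤ a * (t * t) + l * t) : l = 0 := by
  have hdiscrim := discrim_le_zero (K := R) (a := a) (b := l) (c := 0) (by simpa using h)
  rw [discrim, mul_zero, sub_zero] at hdiscrim
  exact pow_eq_zero_iff two_ne_zero |>.mp (le_antisymm hdiscrim (sq_nonneg l))

namespace Matrix

variable {n R : Type*} [Fintype n]

section CommRing

variable [CommRing R] {A : Matrix n n R}

theorem IsSymm.dotProduct_mulVec_comm (hA : A.IsSymm) (x y : n → R) :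
    x ⬝ᵥ A *ᵥ y = y ⬝ᵥ A *ᵥ x := by
  rw [dotProduct_mulVec, ← mulVec_transpose, hA.eq, dotProduct_comm]

theorem IsSymm.quadratic_add (hA : A.IsSymm) (b : n → R) (c : R) (z v : n → R) :
    (z + v) ⬝ᵥ A *ᵥ (z + v) - 2 * (b ⬝ᵥ (z + v)) + c =
      z ⬝ᵥ A *ᵥ z - 2 * (b ⬝ᵥ z) + c + 2 * ((A *ᵥ z - b) ⬝ᵥ v) + v ⬝ᵥ A *ᵥ v := by
  simp only [mulVec_add, dotProduct_add, add_dotProduct, sub_dotProduct]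
  rw [dotProduct_comm (A *ᵥ z) v, hA.dotProduct_mulVec_comm v z, dotProduct_comm b z]
  ring

theorem IsSymm.dotProduct_mulVec_eq_of_mul_mul_eq_self (hA : A.IsSymm) {Ap : Matrix n n R}
    (hAp : A * Ap * A = A) {α b : n → R} (hα : A *ᵥ α = b) : b ⬝ᵥ Ap *ᵥ b = b ⬝ᵥ α := by
  rw [← hα, dotProduct_comm, hA.dotProduct_mulVec_comm, mulVec_mulVec, mulVec_mulVec, hAp,
    dotProduct_comm]

theorem IsSymm.quadratic_add_of_mulVec_eq (hA : A.IsSymm) {α b : n → R} (hα : A *ᵥ α = b)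
    (c : R) (v : n → R) :
    (α + v) ⬝ᵥ A *ᵥ (α + v) - 2 * (b ⬝ᵥ (α + v)) + c =
      α ⬝ᵥ A *ᵥ α - 2 * (b ⬝ᵥ α) + c + v ⬝ᵥ A *ᵥ v := by
  rw [hA.quadratic_add, hα, sub_self, zero_dotProduct, mul_zero, add_zero]

end CommRing

section Ordered

variable [Field R] [LinearOrder R] [IsStrictOrderedRing R] {A : Matrix n n R} {b : n → R} {c : R}

theorem IsSymm.mulVec_eq_of_isMin (hA : A.IsSymm) {z : n → R}
    (hz : ∀ x, z ⬝ᵥ A *ᵥ z - 2 * (b ⬝ᵥ z) + c ≤ x ⬝ᵥ A *ᵥ x - 2 * (b ⬝ᵥ x) + c) :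
    A *ᵥ z = b := by
  have horth : ∀ v, (A *ᵥ z - b) ⬝ᵥ v = 0 := fun v ↦ by
    refine mul_eq_zero.mp (eq_zero_of_forall_nonneg_quadratic (a := v ⬝ᵥ A *ᵥ v) fun t ↦ ?_)
      |>.resolve_left two_ne_zero
    have := hz (z + t • v)
    rw [hA.quadratic_add] at this
    simp only [mulVec_smul, dotProduct_smul, smul_dotProduct, smul_eq_mul] at this
    linarith
  exact sub_eq_zero.mp (dotProduct_self_eq_zero.mp (horth _))

theorem IsSymm.dotProduct_mulVec_nonneg_of_isMin (hA : A.IsSymm) {z : n → R}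
    (hz : ∀ x, z ⬝ᵥ A *ᵥ z - 2 * (b ⬝ᵥ z) + c ≤ x ⬝ᵥ A *ᵥ x - 2 * (b ⬝ᵥ x) + c) (v : n → R) :
    0 ≤ v ⬝ᵥ A *ᵥ v := by
  have := hz (z + v)
  rw [hA.quadratic_add_of_mulVec_eq (hA.mulVec_eq_of_isMin hz)] at this
  linarith

end Ordered

end Matrix

theorem quadratic_minimum_value_general {M : ℕ}
    (A Ap : Matrix (Fin M) (Fin M) ℝ)
    (hsymm : Aᵀ = A)
    (h1 : A * Ap * A = A)
    (b : Fin M → ℝ) (c : ℝ)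
    (f : (Fin M → ℝ) → ℝ)
    (hf : ∀ x, f x = x ⬝ᵥ A.mulVec x - 2 * (b ⬝ᵥ x) + c)
    (hmin : ∃ x₀ : Fin M → ℝ, ∀ x, f x₀ ≤ f x) :
    (∀ x₀ : Fin M → ℝ, (∀ x, f x₀ ≤ f x) → f x₀ = c - b ⬝ᵥ Ap.mulVec b) ∧
      (∀ α : Fin M → ℝ, A.mulVec α = b → ∀ x, f α ≤ f x) := by
  have hA : A.IsSymm := hsymm
  obtain ⟨x₀, hx₀⟩ := hmin
  simp only [hf] at hx₀ ⊢
  refine ⟨fun z hz ↦ ?_, fun α hα x ↦ ?_⟩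
  · have hAz := hA.mulVec_eq_of_isMin hz
    rw [hA.dotProduct_mulVec_eq_of_mul_mul_eq_self h1 hAz, hAz, dotProduct_comm z]
    ring
  · have := hA.quadratic_add_of_mulVec_eq hα c (x - α)
    rw [add_sub_cancel] at this
    rw [this, le_add_iff_nonneg_right]
    exact hA.dotProduct_mulVec_nonneg_of_isMin hx₀ _

theorem quadratic_minimum_value {M : ℕ}
    (A Ap : Matrix (Fin M) (Fin M) ℝ)
    (hsymm : Aᵀ = A)
    (h1 : A * Ap * A = A) (h2 : Ap * A * Ap = Ap)
    (h3 : (A * Ap)ᵀ = A * Ap) (h4 : (Ap * A)ᵀ = Ap * A)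
    (b : Fin M → ℝ) (c : ℝ)
    (f : (Fin M → ℝ) → ℝ)
    (hf : ∀ x, f x = x ⬝ᵥ A.mulVec x - 2 * (b ⬝ᵥ x) + c)
    (hmin : ∃ x₀ : Fin M → ℝ, ∀ x, f x₀ ≤ f x) :
    (∀ x₀ : Fin M → ℝ, (∀ x, f x₀ ≤ f x) → f x₀ = c - b ⬝ᵥ Ap.mulVec b) ∧
      (∀ α : Fin M → ℝ, A.mulVec α = b → ∀ x, f α ≤ f x) :=
  quadratic_minimum_value_general A Ap hsymm h1 b c f hf hmin
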